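/- Let α ∈ {+1, −1}, and let A and A + α Z Zᵀ be n×n real symmetric positive definite matrices, where Z is n×k. Let V = A⁻¹ Z (I_k + α Zᵀ A⁻¹ Z)^{−1/2} (the matrix I_k + α Zᵀ A⁻¹ Z being positive definite under these hypotheses). Then the matrix C = −α((A + α Z Zᵀ)^{−1/2} − A^{−1/2}) is a solution of the algebraic Riccati equation A^{−1/2} C + C A^{−1/2} − α C² = V Vᵀ. -/

import Mathlib

/-!
Write `S = A^{-1/2}`, `T = B^{-1/2}` with `B = A + α Z Zᵀ`, and `M = I + α Zᵀ A⁻¹ Z`. Since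
`α² = 1`, the left side of the Riccati equation for `C = -α (T - S)` collapses to
`α (S² - T²) = α (A⁻¹ - B⁻¹)`, and by the Woodbury identity
`B⁻¹ = A⁻¹ - α A⁻¹ Z M⁻¹ Zᵀ A⁻¹`, so it equals `A⁻¹ Z M⁻¹ Zᵀ A⁻¹ = V Vᵀ`.
For `α = -1` positivity of `M` comes from the two Schur complements of the block matrix
`[[A, Z], [Zᵀ, I]]`, which are `A - Z Zᵀ` and `I - Zᵀ A⁻¹ Z`; invertibility of `M` from
Sylvester's determinant identity `det M = det (A⁻¹ B)`.
-/

open Matrix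

section
open scoped ComplexOrder

/-- The positive semidefinite square root of a positive semidefinite matrix
(the definition Mathlib had in December 2024; it has since been removed). -/
noncomputable def Matrix.PosSemidef.sqrt {n : Type*} [Fintype n] [DecidableEq n] {𝕜 : Type*}
    [RCLike 𝕜] {A : Matrix n n 𝕜} (hA : A.PosSemidef) : Matrix n n 𝕜 :=
  hA.1.eigenvectorUnitary.1 * diagonal ((↑) ∘ Real.sqrt ∘ hA.1.eigenvalues) *
  (star hA.1.eigenvectorUnitary : Matrix n n 𝕜)

end

lemma riccati_neg_smul_sub_of_mul_self_eq_one {K R : Type*} [CommRing K] [Ring R] [Algebra K R] {α : K}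
    (hα : α * α = 1) (s t : R) :
    s * ((-α) • (t - s)) + ((-α) • (t - s)) * s - α • ((-α) • (t - s)) ^ 2 =
      α • (s * s - t * t) := by
  rw [smul_pow, neg_sq, sq α, hα, one_smul, mul_smul_comm, smul_mul_assoc, neg_smul, neg_smul,
    show s * s - t * t = -(s * (t - s)) - (t - s) * s - (t - s) ^ 2 by noncomm_ring]
  module

namespace Matrix

section Woodbury

variable {m n R : Type*} [Fintype m] [DecidableEq m] [Fintype n] [DecidableEq n] [CommRing R]

lemma inv_add_smul_mul {A : Matrix m m R} (U : Matrix m n R) (V : Matrix n m R) (α : R)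
    (hA : IsUnit A) (hM : IsUnit (1 + α • (V * A⁻¹ * U))) :
    (A + α • (U * V))⁻¹ =
      A⁻¹ - α • (A⁻¹ * U * (1 + α • (V * A⁻¹ * U))⁻¹ * (V * A⁻¹)) := by
  set M := 1 + α • (V * A⁻¹ * U)
  have hA' : IsUnit A.det := (isUnit_iff_isUnit_det A).mp hA
  have hMM : M * M⁻¹ = 1 := mul_nonsing_inv M ((isUnit_iff_isUnit_det M).mp hM)
  refine inv_eq_right_inv ?_
  calc (A + α • (U * V)) * (A⁻¹ - α • (A⁻¹ * U * M⁻¹ * (V * A⁻¹)))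
      = 1 + α • (U * V * A⁻¹) - α • (U * (M * M⁻¹) * V * A⁻¹) := by
        simp only [M, Matrix.mul_add, Matrix.add_mul, Matrix.mul_sub, Matrix.mul_smul,
          Matrix.smul_mul, Matrix.mul_assoc, Matrix.one_mul, mul_nonsing_inv_cancel_left _ _ hA',
          mul_nonsing_inv A hA']
    _ = 1 := by rw [hMM, Matrix.mul_one, add_sub_cancel_right]

lemma isUnit_one_add_smul_mul_inv_mul {A : Matrix m m R} (U : Matrix m n R) (V : Matrix n m R)
    (α : R) (hA : IsUnit A) (hB : IsUnit (A + α • (U * V))) :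
    IsUnit (1 + α • (V * A⁻¹ * U)) := by
  have hdet : (1 + α • (V * A⁻¹ * U)).det = (A⁻¹ * (A + α • (U * V))).det := by
    rw [Matrix.mul_assoc, ← Matrix.mul_smul, det_one_add_mul_comm, Matrix.mul_add,
      nonsing_inv_mul A ((isUnit_iff_isUnit_det A).mp hA), Matrix.mul_smul, Matrix.smul_mul,
      Matrix.mul_assoc]
  rw [isUnit_iff_isUnit_det, hdet, det_mul]
  exact ((isUnit_iff_isUnit_det _).mp (isUnit_nonsing_inv_iff.mpr hA)).mul
    ((isUnit_iff_isUnit_det _).mp hB)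

end Woodbury

section RCLike

open scoped ComplexOrder

variable {m n 𝕜 : Type*} [Fintype m] [DecidableEq m] [Fintype n] [DecidableEq n] [RCLike 𝕜]

lemma PosSemidef.sqrt_mul_self {A : Matrix m m 𝕜} (hA : A.PosSemidef) :
    hA.sqrt * hA.sqrt = A := by
  set U : Matrix m m 𝕜 := hA.1.eigenvectorUnitary.1
  set D : Matrix m m 𝕜 := diagonal ((↑) ∘ Real.sqrt ∘ hA.1.eigenvalues)
  have hUU : star U * U = 1 := Unitary.coe_star_mul_self _
  have hDD : D * D = diagonal (RCLike.ofReal ∘ hA.1.eigenvalues) := by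
    simp [D, diagonal_mul_diagonal, ← RCLike.ofReal_mul,
      Real.mul_self_sqrt (hA.eigenvalues_nonneg _)]
  calc hA.sqrt * hA.sqrt = U * (D * (star U * U) * D) * star U := by
        simp only [PosSemidef.sqrt, U, D, Matrix.mul_assoc]
    _ = A := by
      rw [hUU, Matrix.mul_one, hDD]
      conv_rhs => rw [hA.1.spectral_theorem]
      rfl

lemma PosSemidef.posSemidef_sqrt {A : Matrix m m 𝕜} (hA : A.PosSemidef) : hA.sqrt.PosSemidef :=
  (IsUnit.posSemidef_star_right_conjugate_iff Unitary.isUnit_coe).mpr <|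
    PosSemidef.diagonal fun i => by simp [Real.sqrt_nonneg]

lemma PosSemidef.inv_sqrt_mul_inv_sqrt {A : Matrix m m 𝕜} (hA : A.PosSemidef) :
    hA.sqrt⁻¹ * hA.sqrt⁻¹ = A⁻¹ := by
  rw [← Matrix.mul_inv_rev, hA.sqrt_mul_self]

lemma PosDef.posSemidef_one_sub_conjTranspose_mul_inv_mul_iff {A : Matrix m m 𝕜}
    (hA : A.PosDef) (Z : Matrix m n 𝕜) :
    (1 - Zᴴ * A⁻¹ * Z).PosSemidef ↔ (A - Z * Zᴴ).PosSemidef := by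
  have := hA.isUnit.invertible
  have : Invertible (1 : Matrix n n 𝕜) := invertibleOne
  rw [← PosDef.fromBlocks₁₁ Z 1 hA, PosDef.fromBlocks₂₂ A Z PosDef.one, inv_one, Matrix.mul_one]

end RCLike

lemma posDef_one_add_smul_transpose_mul_inv_mul {m n : Type*} [Fintype m] [DecidableEq m]
    [Fintype n] [DecidableEq n] {α : ℝ} (hα : α = 1 ∨ α = -1) {A : Matrix m m ℝ}
    (hA : A.PosDef) (Z : Matrix m n ℝ) (hB : (A + α • (Z * Zᵀ)).PosDef) :
    (1 + α • (Zᵀ * A⁻¹ * Z)).PosDef := by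
  rcases hα with rfl | rfl
  · rw [one_smul]
    exact PosDef.one.add_posSemidef (hA.inv.posSemidef.conjTranspose_mul_mul_same Z)
  · refine (PosSemidef.posDef_iff_isUnit ?_).mpr
      (isUnit_one_add_smul_mul_inv_mul Z Zᵀ _ hA.isUnit hB.isUnit)
    rw [neg_one_smul, ← sub_eq_add_neg] at hB ⊢
    exact (hA.posSemidef_one_sub_conjTranspose_mul_inv_mul_iff Z).mpr hB.posSemidef

end Matrix

theorem inv_sqrt_correction_solves_riccati {n k : ℕ} (α : ℝ) (hα : α = 1 ∨ α = -1)
    (A : Matrix (Fin n) (Fin n) ℝ) (Z : Matrix (Fin n) (Fin k) ℝ)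
    (hA : A.PosDef) (hB : (A + α • (Z * Zᵀ)).PosDef) :
    ∃ h : ((1 : Matrix (Fin k) (Fin k) ℝ) + α • (Zᵀ * A⁻¹ * Z)).PosDef,
      (hA.posSemidef.sqrt)⁻¹ *
          ((-α) • ((hB.posSemidef.sqrt)⁻¹ - (hA.posSemidef.sqrt)⁻¹)) +
        ((-α) • ((hB.posSemidef.sqrt)⁻¹ - (hA.posSemidef.sqrt)⁻¹)) *
          (hA.posSemidef.sqrt)⁻¹ -
        α • ((-α) • ((hB.posSemidef.sqrt)⁻¹ - (hA.posSemidef.sqrt)⁻¹)) ^ 2 =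
      (A⁻¹ * Z * (h.posSemidef.sqrt)⁻¹) * (A⁻¹ * Z * (h.posSemidef.sqrt)⁻¹)ᵀ := by
  have hαα : α * α = 1 := by rcases hα with rfl | rfl <;> norm_num
  have hM := posDef_one_add_smul_transpose_mul_inv_mul hα hA Z hB
  refine ⟨hM, ?_⟩
  have hA_symm : (A⁻¹)ᵀ = A⁻¹ := (isHermitian_iff_isSymm.mp hA.isHermitian).inv.eq
  have hR_symm : (hM.posSemidef.sqrt⁻¹)ᵀ = hM.posSemidef.sqrt⁻¹ :=
    (isHermitian_iff_isSymm.mp hM.posSemidef.posSemidef_sqrt.isHermitian).inv.eq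
  rw [riccati_neg_smul_sub_of_mul_self_eq_one hαα, hA.posSemidef.inv_sqrt_mul_inv_sqrt,
    hB.posSemidef.inv_sqrt_mul_inv_sqrt, inv_add_smul_mul Z Zᵀ α hA.isUnit hM.isUnit,
    sub_sub_cancel, smul_smul, hαα, one_smul, transpose_mul, transpose_mul, hR_symm, hA_symm,
    ← hM.posSemidef.inv_sqrt_mul_inv_sqrt]
  simp only [Matrix.mul_assoc]
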